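/- arXiv:1107.2524 — 3 statements merged into one kernel-verified Lean document; each statement's English description precedes it below -/
import Mathlib

section
/- For 0 < L < L₀ and x₋ < x₀ < x₊ with N(x₋) = N(x₊) = L, the iterated integral identity holds: ∫_{L}^{L₀} ∫_{x₋(L')}^{x₊(L')} [L' / (√(N(x)² − L'²) · √(L'² − L²))] dx dL' = (π/2)(x₊(L) − x₋(L)), where the order of integration may be exchanged since the integrand is nonnegative, and the inner L'-integral evaluates via ∫_{L}^{N(x)} L' dL' / (√(N(x)²−L'²)√(L'²−L²)) = π/2. -/
/-! For `N x > L`, the substitution `u = (2L'² - L² - N(x)²) / (N(x)² - L²)` maps `[L, N x]` onto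
`[-1, 1]` and turns the inner integral in `L'` into `∫_{-1}^{1} du / (2√(1 - u²)) = π / 2`.
The integrand is nonnegative and, through the junk value `√y = 0` for `y ≤ 0`, vanishes unless
`L' < N x`, i.e. unless `x₋(L') < x < x₊(L')`. Hence both iterated integrals are integrals over
`(L, L₀) × (x₋(L), x₊(L))`, the product integrability follows from Tonelli because every
`L'`-integral equals `π / 2`, and Fubini gives `∫_{x₋(L)}^{x₊(L)} π / 2 dx`. -/

open intervalIntegral Real MeasureTheory Set

lemma integrable_prod_of_integral_eq_const {α β : Type*} [MeasurableSpace α] [MeasurableSpace β]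
    {μ : Measure α} {ν : Measure β} [SFinite μ] [IsFiniteMeasure ν] {f : α × β → ℝ} {C : ℝ}
    (hf : AEStronglyMeasurable f (μ.prod ν)) (hnonneg : ∀ᵐ y ∂ν, ∀ᵐ x ∂μ, 0 ≤ f (x, y))
    (hint : ∀ᵐ y ∂ν, Integrable (fun x => f (x, y)) μ) (hC : ∀ᵐ y ∂ν, ∫ x, f (x, y) ∂μ = C) :
    Integrable f (μ.prod ν) := by
  refine (integrable_prod_iff' hf).2 ⟨hint, (integrable_const C).congr ?_⟩
  filter_upwards [hnonneg, hC] with y hy hCy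
  rw [← hCy]
  exact integral_congr_ae (hy.mono fun x hx => (norm_of_nonneg hx).symm)

lemma intervalIntegral_eq_setIntegral_Ioo_of_sdiff_eq_zero {f : ℝ → ℝ} {a b c d : ℝ}
    (hcd : c ≤ d) (hsub : Ioo c d ⊆ Ioo a b) (hf : ∀ x ∈ Ioo a b \ Ioo c d, f x = 0) :
    ∫ x in c..d, f x = ∫ x in Ioo a b, f x := by
  rw [intervalIntegral.integral_of_le hcd, integral_Ioc_eq_integral_Ioo]
  exact (setIntegral_eq_of_subset_of_forall_sdiff_eq_zero measurableSet_Ioo hsub hf).symm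

noncomputable def abelKernel (a b t : ℝ) : ℝ :=
  t / (√(b ^ 2 - t ^ 2) * √(t ^ 2 - a ^ 2))

section AbelKernel

variable {a b c t : ℝ}

lemma abelKernel_nonneg (ht : 0 ≤ t) : 0 ≤ abelKernel a b t := by
  unfold abelKernel; positivity

lemma abelKernel_eq_zero_of_le (hb : 0 ≤ b) (hbt : b ≤ t) : abelKernel a b t = 0 := by
  have : b ^ 2 - t ^ 2 ≤ 0 := by nlinarith
  simp [abelKernel, Real.sqrt_eq_zero'.mpr this]

lemma hasDerivAt_arcsin_abelKernel (ha : 0 ≤ a) (ht : t ∈ Ioo a b) :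
    HasDerivAt (fun t => arcsin ((2 * t ^ 2 - a ^ 2 - b ^ 2) / (b ^ 2 - a ^ 2)))
      (2 * abelKernel a b t) t := by
  obtain ⟨hat, htb⟩ := ht
  have ht0 : 0 < t := ha.trans_lt hat
  have hbt : 0 < b ^ 2 - t ^ 2 := by nlinarith
  have hta : 0 < t ^ 2 - a ^ 2 := by nlinarith
  have hba : 0 < b ^ 2 - a ^ 2 := by nlinarith
  set u := (2 * t ^ 2 - a ^ 2 - b ^ 2) / (b ^ 2 - a ^ 2)
  have hu : HasDerivAt (fun t => (2 * t ^ 2 - a ^ 2 - b ^ 2) / (b ^ 2 - a ^ 2))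
      (4 * t / (b ^ 2 - a ^ 2)) t := by
    refine ((((hasDerivAt_pow 2 t).const_mul 2).sub_const (a ^ 2)).sub_const (b ^ 2)).div_const
      (b ^ 2 - a ^ 2) |>.congr_deriv ?_
    norm_num; ring
  have hu_ne_neg_one : u ≠ -1 := by
    rw [Ne, div_eq_iff hba.ne']; nlinarith
  have hu_ne_one : u ≠ 1 := by
    rw [Ne, div_eq_iff hba.ne']; nlinarith
  have hsqrt : √(1 - u ^ 2) = 2 * √(b ^ 2 - t ^ 2) * √(t ^ 2 - a ^ 2) / (b ^ 2 - a ^ 2) := by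
    rw [Real.sqrt_eq_iff_mul_self_eq_of_pos (by positivity)]
    simp only [u]
    field_simp
    rw [Real.sq_sqrt hbt.le, Real.sq_sqrt hta.le]
    ring
  refine ((hasDerivAt_arcsin hu_ne_neg_one hu_ne_one).comp t hu).congr_deriv ?_
  rw [hsqrt, abelKernel]
  have := Real.sqrt_pos.mpr hbt
  have := Real.sqrt_pos.mpr hta
  field_simp
  ring

lemma continuousOn_arcsin_abelKernel :
    ContinuousOn (fun t => arcsin ((2 * t ^ 2 - a ^ 2 - b ^ 2) / (b ^ 2 - a ^ 2))) (Icc a b) :=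
  (continuous_arcsin.comp (by fun_prop)).continuousOn

lemma integrableOn_abelKernel (ha : 0 ≤ a) : IntegrableOn (abelKernel a b) (Ioc a b) := by
  have h := integrableOn_deriv_of_nonneg (continuousOn_arcsin_abelKernel (b := b))
    (fun t ht => hasDerivAt_arcsin_abelKernel ha ht)
    (fun t ht => mul_nonneg zero_le_two (abelKernel_nonneg (ha.trans ht.1.le)))
  simpa [IntegrableOn] using h.const_mul 2⁻¹

lemma integral_abelKernel (ha : 0 ≤ a) (hab : a < b) :
    ∫ t in a..b, abelKernel a b t = π / 2 := by
  have hba : b ^ 2 - a ^ 2 ≠ 0 := by nlinarith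
  have hint : IntervalIntegrable (fun t => 2 * abelKernel a b t) volume a b :=
    ((intervalIntegrable_iff_integrableOn_Ioc_of_le hab.le).2
      (integrableOn_abelKernel ha)).const_mul 2
  have h := integral_eq_sub_of_hasDeriv_right_of_le hab.le continuousOn_arcsin_abelKernel
    (fun t ht => (hasDerivAt_arcsin_abelKernel ha ht).hasDerivWithinAt) hint
  have hlow : (2 * a ^ 2 - a ^ 2 - b ^ 2) / (b ^ 2 - a ^ 2) = -1 := by field_simp; ring
  have hup : (2 * b ^ 2 - a ^ 2 - b ^ 2) / (b ^ 2 - a ^ 2) = 1 := by field_simp; ring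
  rw [hlow, hup, arcsin_one, arcsin_neg_one, intervalIntegral.integral_const_mul] at h
  linarith

lemma integral_abelKernel_Ioo_of_le (ha : 0 ≤ a) (hab : a < b) (hbc : b ≤ c) :
    IntegrableOn (abelKernel a b) (Ioo a c) ∧ ∫ t in Ioo a c, abelKernel a b t = π / 2 := by
  have hzero : ∀ t ∈ Ioc a c \ Ioc a b, abelKernel a b t = 0 := fun t ht =>
    abelKernel_eq_zero_of_le (ha.trans hab.le) (not_le.1 fun htb => ht.2 ⟨ht.1.1, htb⟩).le
  refine ⟨((integrableOn_abelKernel ha).of_forall_sdiff_eq_zero measurableSet_Ioc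
    hzero).mono_set Ioo_subset_Ioc_self, ?_⟩
  rw [← integral_Ioc_eq_integral_Ioo, setIntegral_eq_of_subset_of_forall_sdiff_eq_zero
    measurableSet_Ioc (Ioc_subset_Ioc_right hbc) hzero, ← intervalIntegral.integral_of_le hab.le,
    integral_abelKernel ha hab]

end AbelKernel

section Unimodal

variable {N : ℝ → ℝ} {x₀ a b c x : ℝ}

lemma apply_le_of_unimodal (hmono : MonotoneOn N (Iic x₀)) (hanti : AntitoneOn N (Ici x₀)) :
    N x ≤ N x₀ := by
  rcases le_total x x₀ with hx | hx
  · exact hmono hx self_mem_Iic hx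
  · exact hanti self_mem_Ici hx hx

lemma lt_apply_iff_mem_Ioo_of_unimodal (hmono : StrictMonoOn N (Iic x₀))
    (hanti : StrictAntiOn N (Ici x₀)) (ha : a ≤ x₀) (hb : x₀ ≤ b) (hNa : N a = c) (hNb : N b = c) :
    c < N x ↔ x ∈ Ioo a b := by
  rcases le_total x x₀ with hx | hx
  · rw [← hNa, hmono.lt_iff_lt ha hx]
    refine ⟨fun hax => ⟨hax, (hx.trans hb).lt_of_ne ?_⟩, And.left⟩
    rintro rfl
    exact (hmono ha hx hax).ne (hNa.trans hNb.symm)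
  · rw [← hNb, hanti.lt_iff_gt hb hx]
    refine ⟨fun hxb => ⟨(ha.trans hx).lt_of_ne' ?_, hxb⟩, And.right⟩
    rintro rfl
    exact (hanti hx hb hxb).ne' (hNa.trans hNb.symm)

end Unimodal

/-- The iterated integral identity used in the derivation of the inversion formula,
together with the key single-variable evaluation of the inner integral. -/
theorem stmt3 (N : ℝ → ℝ) (x₀ L₀ L : ℝ)
    (hcont : Continuous N)
    (hmono : StrictMonoOn N (Set.Iic x₀))
    (hanti : StrictAntiOn N (Set.Ici x₀))
    (hmax : N x₀ = L₀)
    (hL : 0 < L) (hLL₀ : L < L₀)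
    (xm xp : ℝ → ℝ)
    (hturn : ∀ L' ∈ Set.Ico L L₀,
      xm L' ≤ x₀ ∧ x₀ ≤ xp L' ∧ N (xm L') = L' ∧ N (xp L') = L') :
    (∀ x ∈ Set.Ioo (xm L) (xp L),
      ∫ L' in L..N x, L' / (Real.sqrt ((N x)^2 - L'^2) * Real.sqrt (L'^2 - L^2))
        = π / 2) ∧
    (∫ L' in L..L₀, ∫ x in xm L'..xp L',
        L' / (Real.sqrt ((N x)^2 - L'^2) * Real.sqrt (L'^2 - L^2)))
      = (π / 2) * (xp L - xm L) := by
  have hsuper : ∀ L' ∈ Ico L L₀, ∀ x, L' < N x ↔ x ∈ Ioo (xm L') (xp L') := fun L' hL' x =>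
    have ⟨ha, hb, hNa, hNb⟩ := hturn L' hL'
    lt_apply_iff_mem_Ioo_of_unimodal hmono hanti ha hb hNa hNb
  have hsuperL := hsuper L ⟨le_rfl, hLL₀⟩
  have hx₀ : x₀ ∈ Ioo (xm L) (xp L) := (hsuperL x₀).1 (hmax ▸ hLL₀)
  have hinner : ∀ x ∈ Ioo (xm L) (xp L), IntegrableOn (abelKernel L (N x)) (Ioo L L₀) ∧
      ∫ L' in Ioo L L₀, abelKernel L (N x) L' = π / 2 := fun x hx =>
    integral_abelKernel_Ioo_of_le hL.le ((hsuperL x).2 hx)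
      (hmax ▸ apply_le_of_unimodal hmono.monotoneOn hanti.antitoneOn)
  refine ⟨fun x hx => integral_abelKernel hL.le ((hsuperL x).2 hx), ?_⟩
  have houter : ∀ L' ∈ Ioo L L₀, ∫ x in xm L'..xp L', abelKernel L (N x) L' =
      ∫ x in Ioo (xm L) (xp L), abelKernel L (N x) L' := fun L' hL' => by
    have hsuperL' := hsuper L' ⟨hL'.1.le, hL'.2⟩
    obtain ⟨ha, hb, -, -⟩ := hturn L' ⟨hL'.1.le, hL'.2⟩
    refine intervalIntegral_eq_setIntegral_Ioo_of_sdiff_eq_zero (ha.trans hb)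
      (fun x hx => (hsuperL x).1 (hL'.1.trans ((hsuperL' x).2 hx))) ?_
    rintro x ⟨hxL, hxL'⟩
    exact abelKernel_eq_zero_of_le (hL.trans ((hsuperL x).2 hxL)).le
      (not_lt.1 fun h => hxL' ((hsuperL' x).1 h))
  have hmeas : Measurable fun p : ℝ × ℝ => abelKernel L (N p.2) p.1 := by
    have := hcont.measurable
    unfold abelKernel; fun_prop
  have hprod := integrable_prod_of_integral_eq_const (μ := volume.restrict (Ioo L L₀))
    (ν := volume.restrict (Ioo (xm L) (xp L))) hmeas.aestronglyMeasurable
    (ae_restrict_of_forall_mem measurableSet_Ioo fun _ _ => ae_restrict_of_forall_mem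
      measurableSet_Ioo fun L' hL' => abelKernel_nonneg (hL.trans hL'.1).le)
    (ae_restrict_of_forall_mem measurableSet_Ioo fun x hx => (hinner x hx).1)
    (ae_restrict_of_forall_mem measurableSet_Ioo fun x hx => (hinner x hx).2)
  calc ∫ L' in L..L₀, ∫ x in xm L'..xp L', abelKernel L (N x) L'
      = ∫ L' in Ioo L L₀, ∫ x in Ioo (xm L) (xp L), abelKernel L (N x) L' := by
        rw [intervalIntegral.integral_of_le hLL₀.le, integral_Ioc_eq_integral_Ioo]
        exact setIntegral_congr_fun measurableSet_Ioo houter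
    _ = ∫ x in Ioo (xm L) (xp L), ∫ L' in Ioo L L₀, abelKernel L (N x) L' :=
        integral_integral_swap hprod
    _ = ∫ x in Ioo (xm L) (xp L), π / 2 :=
        setIntegral_congr_fun measurableSet_Ioo fun x hx => (hinner x hx).2
    _ = π / 2 * (xp L - xm L) := by
        rw [setIntegral_const, volume_real_Ioo_of_le (hx₀.1.trans hx₀.2).le, smul_eq_mul, mul_comm]
end

section
/- The modified Miñano lens index n(r) defined piecewise as 2c/(r² + c²) for 0 ≤ r ≤ b, 1 for b < r ≤ 1, and √(2/r − 1) for 1 < r ≤ c, where 0 < b < 1 and c = 1 + √(1 − b²), attains its maximum value 2/c at r = 0 and its minimum value √(2/c − 1) at r = c, and the ratio of maximum to minimum equals 2/b. -/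
/-- The modified Miñano lens index attains its maximum `2/c` at `r = 0`, its minimum
`√(2/c − 1)` at `r = c`, and the ratio of maximum to minimum equals `2/b`. -/
theorem stmt12 (b c : ℝ) (hb : 0 < b) (hb1 : b < 1)
    (hc : c = 1 + Real.sqrt (1 - b ^ 2))
    (n : ℝ → ℝ)
    (hn : ∀ r, n r = if r ≤ b then 2 * c / (r ^ 2 + c ^ 2)
                     else if r ≤ 1 then 1
                     else Real.sqrt (2 / r - 1)) :
    n 0 = 2 / c ∧
    n c = Real.sqrt (2 / c - 1) ∧
    (∀ r ∈ Set.Icc (0:ℝ) c, n r ≤ n 0) ∧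
    (∀ r ∈ Set.Icc (0:ℝ) c, n c ≤ n r) ∧
    n 0 / n c = 2 / b := by
  have hb2 : (0:ℝ) < 1 - b ^ 2 := by nlinarith
  have hs : Real.sqrt (1 - b ^ 2) ^ 2 = 1 - b ^ 2 := Real.sq_sqrt hb2.le
  have hs0 : 0 < Real.sqrt (1 - b ^ 2) := Real.sqrt_pos.mpr hb2
  have hs1 : Real.sqrt (1 - b ^ 2) ≤ 1 := by
    nlinarith [Real.sqrt_nonneg (1 - b ^ 2)]
  have hc1 : 1 < c := by rw [hc]; linarith
  have hc2 : c ≤ 2 := by rw [hc]; linarith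
  have hc0 : 0 < c := by linarith
  have hkey : c ^ 2 = 2 * c - b ^ 2 := by
    rw [hc]; nlinarith
  -- √(2/c - 1) = b/c
  have hfrac : 2 / c - 1 = (b / c) ^ 2 := by
    field_simp
    nlinarith
  have hnc_val : Real.sqrt (2 / c - 1) = b / c := by
    rw [hfrac, Real.sqrt_sq (by positivity)]
  have hn0 : n 0 = 2 / c := by
    rw [hn 0, if_pos hb.le]
    rw [show (0:ℝ) ^ 2 + c ^ 2 = c * c by ring]
    rw [mul_div_assoc, div_mul_cancel_right₀ (by positivity)]
    rw [div_eq_mul_inv]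
  have hnc : n c = Real.sqrt (2 / c - 1) := by
    rw [hn c, if_neg (by linarith), if_neg (by linarith)]
  have hbc : b / c ≤ 1 := by
    rw [div_le_one hc0]; linarith
  refine ⟨hn0, hnc, ?_, ?_, ?_⟩
  · -- max
    intro r ⟨hr0, hrc⟩
    rw [hn0, hn r]
    split_ifs with h1 h2
    · rw [div_le_div_iff₀ (by positivity) hc0]
      nlinarith
    · rw [le_div_iff₀ hc0]; linarith
    · push_neg at h2
      have h2' : 0 < r := by linarith
      have : Real.sqrt (2 / r - 1) ≤ 1 := by
        rw [show (1:ℝ) = Real.sqrt 1 from Real.sqrt_one.symm]; apply Real.sqrt_le_sqrt; rw [Real.sqrt_one]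
        rw [sub_le_iff_le_add, div_le_iff₀ h2']; nlinarith
      calc Real.sqrt (2 / r - 1) ≤ 1 := this
        _ ≤ 2 / c := by rw [le_div_iff₀ hc0]; linarith
  · -- min
    intro r ⟨hr0, hrc⟩
    rw [hnc, hnc_val, hn r]
    split_ifs with h1 h2
    · calc b / c ≤ 1 := hbc
        _ ≤ 2 * c / (r ^ 2 + c ^ 2) := by
          rw [le_div_iff₀ (by positivity)]
          nlinarith
    · linarith
    · push_neg at h2
      have h2' : 0 < r := by linarith
      rw [← hnc_val]
      apply Real.sqrt_le_sqrt
      have : 2 / c ≤ 2 / r := by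
        apply div_le_div_of_nonneg_left (by norm_num) h2' hrc
      linarith
  · rw [hn0, hnc, hnc_val]
    field_simp
end

section
/- If a measurable function N : [x₋, X] → [L_m, N_m] with 0 < L_m ≤ N_m < ∞ satisfies the moment conditions ∫_{x₋}^{X} N(x)^{−(2n+1)} dx = 1/(2n+1) for all n ∈ ℕ₀, then for every real (or complex) L: e^{L²} = ∫_{x₋}^{X} (1 + 2(L/N(x))²)·exp((L/N(x))²) dx / N(x). -/
/-!
Since `(1 + 2a) eᵃ = ∑ (2n+1) aⁿ / n!`, the integrand with `a = (L/N)²` expands as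
`∑ (2n+1)/n! · L²ⁿ · N^{-(2n+1)}`, a series of nonnegative terms. Integrating termwise, the moment
conditions cancel the factors `2n+1`, leaving `∑ L²ⁿ / n! = e^{L²}`.
-/
open MeasureTheory Filter

theorem hasSum_pow_div_factorial (a : ℝ) :
    HasSum (fun n : ℕ => a ^ n / n.factorial) (Real.exp a) := by
  rw [Real.exp_eq_exp_ℝ]
  exact NormedSpace.expSeries_div_hasSum_exp a

theorem hasSum_mul_pow_div_factorial (a : ℝ) :
    HasSum (fun n : ℕ => n * a ^ n / n.factorial) (a * Real.exp a) := by
  have hshift : HasSum (fun n : ℕ => ((n + 1 : ℕ) : ℝ) * a ^ (n + 1) / (n + 1).factorial)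
      (a * Real.exp a) := by
    refine ((hasSum_pow_div_factorial a).mul_left a).congr_fun fun n => ?_
    rw [Nat.factorial_succ, pow_succ]
    push_cast
    field_simp
  simpa using HasSum.zero_add (f := fun n : ℕ => (n : ℝ) * a ^ n / n.factorial) hshift

theorem hasSum_odd_mul_pow_div_factorial (a : ℝ) :
    HasSum (fun n : ℕ => (2 * n + 1) / n.factorial * a ^ n) ((1 + 2 * a) * Real.exp a) := by
  convert (hasSum_pow_div_factorial a).add ((hasSum_mul_pow_div_factorial a).mul_left 2)
    using 1
  · ext n
    ring
  · ring

section OddMoments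

variable {α : Type*} [MeasurableSpace α] {μ : Measure α} {u : α → ℝ}

theorem integral_mul_exp_sq_eq_exp_sq_of_odd_moments (hu : 0 ≤ᵐ[μ] u)
    (hmom : ∀ n : ℕ, ∫ x, u x ^ (2 * n + 1) ∂μ = 1 / (2 * n + 1)) (L : ℝ) :
    ∫ x, (1 + 2 * (L * u x) ^ 2) * Real.exp ((L * u x) ^ 2) * u x ∂μ = Real.exp (L ^ 2) := by
  let f (n : ℕ) (x : α) : ℝ := (2 * n + 1) / n.factorial * L ^ (2 * n) * u x ^ (2 * n + 1)
  have hpointwise (x : α) :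
      HasSum (fun n => f n x) ((1 + 2 * (L * u x) ^ 2) * Real.exp ((L * u x) ^ 2) * u x) :=
    ((hasSum_odd_mul_pow_div_factorial ((L * u x) ^ 2)).mul_right (u x)).congr_fun
      fun n => by simp only [f]; ring
  -- the moment integrals are nonzero, so they cannot be junk values of non-integrable functions
  have hint (n : ℕ) : Integrable (f n) μ :=
    (Integrable.of_integral_ne_zero (by rw [hmom n]; positivity)).const_mul _
  have hintegral (n : ℕ) : ∫ x, f n x ∂μ = (L ^ 2) ^ n / n.factorial := by
    simp only [f, integral_const_mul, hmom n]
    field_simp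
    ring
  have hnorm (n : ℕ) : ∫ x, ‖f n x‖ ∂μ = ∫ x, f n x ∂μ := by
    refine integral_congr_ae ?_
    filter_upwards [hu] with x hx
    refine Real.norm_of_nonneg (mul_nonneg ?_ (pow_nonneg hx _))
    rw [pow_mul]
    positivity
  have hsum : HasSum (fun n => ∫ x, f n x ∂μ) (Real.exp (L ^ 2)) := by
    simpa only [hintegral] using hasSum_pow_div_factorial (L ^ 2)
  rw [← hsum.tsum_eq, integral_tsum_of_summable_integral_norm hint
    (by simpa only [hnorm] using hsum.summable)]
  exact integral_congr_ae (Eventually.of_forall fun x => (hpointwise x).tsum_eq.symm)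

end OddMoments

theorem stmt16_general (xm X Lm Nm : ℝ) (hx : xm < X) (hLm : 0 < Lm)
    (N : ℝ → ℝ)
    (hbd : ∀ x ∈ Set.Icc xm X, Lm ≤ N x ∧ N x ≤ Nm)
    (hmom : ∀ n : ℕ, (∫ x in xm..X, 1 / (N x) ^ (2 * n + 1)) = 1 / (2 * (n:ℝ) + 1)) :
    ∀ L : ℝ, Real.exp (L ^ 2)
      = ∫ x in xm..X,
          (1 + 2 * (L / N x) ^ 2) * Real.exp ((L / N x) ^ 2) / N x := by
  intro L
  have hpos : 0 ≤ᵐ[volume.restrict (Set.Ioc xm X)] fun x => 1 / N x := by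
    filter_upwards [ae_restrict_mem measurableSet_Ioc] with x hxI
    exact one_div_nonneg.mpr (hLm.trans_le (hbd x (Set.Ioc_subset_Icc_self hxI)).1).le
  have hmom' (n : ℕ) :
      ∫ x in Set.Ioc xm X, (1 / N x) ^ (2 * n + 1) = 1 / (2 * n + 1) := by
    simpa only [one_div_pow, intervalIntegral.integral_of_le hx.le] using hmom n
  have h := integral_mul_exp_sq_eq_exp_sq_of_odd_moments hpos hmom' L
  simp only [mul_one_div] at h
  rw [intervalIntegral.integral_of_le hx.le, h]

/-- If a measurable `N : [x₋, X] → [L_m, N_m]` (with `0 < L_m ≤ N_m < ∞`) satisfies the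
odd moment conditions `∫ N^{−(2n+1)} = 1/(2n+1)` for all `n`, then for every real `L`,
`e^{L²} = ∫_{x₋}^{X} (1 + 2(L/N)²) exp((L/N)²) dx / N`. -/
theorem stmt16 (xm X Lm Nm : ℝ) (hx : xm < X) (hLm : 0 < Lm) (hNm : Lm ≤ Nm)
    (N : ℝ → ℝ) (hmeas : Measurable N)
    (hbd : ∀ x ∈ Set.Icc xm X, Lm ≤ N x ∧ N x ≤ Nm)
    (hmom : ∀ n : ℕ, (∫ x in xm..X, 1 / (N x) ^ (2 * n + 1)) = 1 / (2 * (n:ℝ) + 1)) :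
    ∀ L : ℝ, Real.exp (L ^ 2)
      = ∫ x in xm..X,
          (1 + 2 * (L / N x) ^ 2) * Real.exp ((L / N x) ^ 2) / N x :=
  stmt16_general xm X Lm Nm hx hLm N hbd hmom
end
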